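/- arXiv:2505.01949 — 2 statements merged into one kernel-verified Lean document; each statement's English description precedes it below -/
import Mathlib

section
/- Let L, R : S₃-indexed family of elements of an abelian group indexed by triples of distinct indices from {1,2,3}, satisfying the total-symmetry reductions L = R_{312} = L_{213} = R_{321}, R = L_{231} = R_{132} = L_{321}, and L_{132} = R_{213} = L_{312} = R_{231}. Then the Breen polytope order-h² equation 2L + R - 6R - 2L_{132} - R_{132} = L_{213} + 2R_{213} + 6L - L - 2R reduces to 4L + 4R + 4L_{132} = 0; hence the Breen polytope axiom holds at second order if and only if the coherency condition L + R + L_{132} = 0 holds. -/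
/-- the permutation `213` of the subscript triple -/
def c213 : Equiv.Perm (Fin 3) := Equiv.swap 0 1
/-- the permutation `132` of the subscript triple -/
def c132 : Equiv.Perm (Fin 3) := Equiv.swap 1 2
/-- the permutation `321` of the subscript triple -/
def c321 : Equiv.Perm (Fin 3) := Equiv.swap 0 2
/-- the permutation `231` of the subscript triple -/
def c231 : Equiv.Perm (Fin 3) := Equiv.swap 0 1 * Equiv.swap 1 2
/-- the permutation `312` of the subscript triple -/
def c312 : Equiv.Perm (Fin 3) := Equiv.swap 1 2 * Equiv.swap 0 1

/-- Let `L, R` be families indexed by permutations of `{1,2,3}` in an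
abelian group (a `ℚ`-module, so that dividing by 4 is allowed), satisfying the
total-symmetry reductions `L = R_{312} = L_{213} = R_{321}`, `R = L_{231} = R_{132} = L_{321}`,
and `L_{132} = R_{213} = L_{312} = R_{231}`.  Then the Breen polytope order-h² equation
`2L + R - 6R - 2L_{132} - R_{132} = L_{213} + 2R_{213} + 6L - L - 2R`
reduces to `4L + 4R + 4L_{132} = 0`; hence the Breen polytope axiom holds at second order
if and only if the coherency condition `L + R + L_{132} = 0` holds. -/
theorem breen_polytope_iff_coherency
    (G : Type*) [AddCommGroup G] [Module ℚ G]
    (L R : Equiv.Perm (Fin 3) → G)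
    (hL1 : L 1 = R c312) (hL2 : L 1 = L c213) (hL3 : L 1 = R c321)
    (hR1 : R 1 = L c231) (hR2 : R 1 = R c132) (hR3 : R 1 = L c321)
    (hM1 : L c132 = R c213) (hM2 : L c132 = L c312) (hM3 : L c132 = R c231) :
    ((2 • L 1 + R 1 - 6 • R 1 - 2 • L c132 - R c132
        = L c213 + 2 • R c213 + 6 • L 1 - L 1 - 2 • R 1)
      ↔ 4 • (L 1 + R 1 + L c132) = 0)
    ∧ ((2 • L 1 + R 1 - 6 • R 1 - 2 • L c132 - R c132
        = L c213 + 2 • R c213 + 6 • L 1 - L 1 - 2 • R 1)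
      ↔ L 1 + R 1 + L c132 = 0) := by
  rw [← hL2, ← hM1, ← hR2]
  have d : (2 • L 1 + R 1 - 6 • R 1 - 2 • L c132 - R 1)
        - (L 1 + 2 • L c132 + 6 • L 1 - L 1 - 2 • R 1)
        = -(4 • (L 1 + R 1 + L c132)) := by abel
  have key : (2 • L 1 + R 1 - 6 • R 1 - 2 • L c132 - R 1
        = L 1 + 2 • L c132 + 6 • L 1 - L 1 - 2 • R 1)
      ↔ 4 • (L 1 + R 1 + L c132) = 0 := by
    constructor <;> intro h
    · have h0 := sub_eq_zero.mpr h
      rw [d] at h0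
      exact neg_eq_zero.mp h0
    · rw [h, neg_zero] at d
      exact sub_eq_zero.mp d
  have h4 : ∀ x : G, 4 • x = 0 ↔ x = 0 := fun x => by
    rw [← Nat.cast_smul_eq_nsmul ℚ 4 x]
    simp
  exact ⟨key, key.trans (h4 _)⟩
end

section
/- In a strictly-unital monoidal Ch^{[-1,0]}-category where the associator equals Φ(t12, t23) for a unital infinitesimal 2-braiding t (t_{UI} = t_{IU} = 0 and t_{f⊠1_I} = t_{1_I⊠f} = 0), the order-h² triangle axiom holds: α_{UIV} = 1_{U⊗V} and the homotopy components α_{f⊠1_I⊠g} = (h²/24)·([t12,t23])_{f⊠1_I⊠g} = 0, where ([t12,t23])_{f⊠1_I⊠g} expands via the vertical-composition formula into four terms each containing a factor t_{UI}, t_{IV}, t_{f⊠1_I} or t_{1_I⊠g}. -/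
open CategoryTheory

/-- A "degree −1 hom layer" on a preadditive category `D`, modelling the homotopies
(degree −1 cells) of a `Ch_R^{[-1,0]}`-enriched category: for each pair of objects an
abelian group `Hmt X Y` of homotopies, a differential `d` to the degree-0 morphisms,
and (truncated) composition of homotopies with degree-0 morphisms on either side. -/
structure HomotopyStructure (D : Type*) [Category D] [Preadditive D] where
  /-- degree −1 cells -/
  Hmt : D → D → Type*
  addCommGroup : ∀ X Y, AddCommGroup (Hmt X Y)
  /-- the hom differential `∂` -/
  d : ∀ {X Y}, Hmt X Y → (X ⟶ Y)
  /-- post-composition of a homotopy with a degree-0 morphism, `g ∘ φ` -/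
  lcomp : ∀ {X Y Z}, Hmt X Y → (Y ⟶ Z) → Hmt X Z
  /-- pre-composition of a homotopy with a degree-0 morphism, `φ ∘ f` -/
  rcomp : ∀ {X Y Z}, (X ⟶ Y) → Hmt Y Z → Hmt X Z
  d_add : ∀ {X Y} (φ ψ : Hmt X Y), d (φ + ψ) = d φ + d ψ
  lcomp_add : ∀ {X Y Z} (φ ψ : Hmt X Y) (g : Y ⟶ Z), lcomp (φ + ψ) g = lcomp φ g + lcomp ψ g
  rcomp_add : ∀ {X Y Z} (f : X ⟶ Y) (φ ψ : Hmt Y Z), rcomp f (φ + ψ) = rcomp f φ + rcomp f ψ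
  lcomp_id : ∀ {X Y} (φ : Hmt X Y), lcomp φ (𝟙 Y) = φ
  rcomp_id : ∀ {X Y} (φ : Hmt X Y), rcomp (𝟙 X) φ = φ
  lcomp_comp : ∀ {X Y Z W} (φ : Hmt X Y) (g : Y ⟶ Z) (h : Z ⟶ W),
    lcomp φ (g ≫ h) = lcomp (lcomp φ g) h
  rcomp_comp : ∀ {X Y Z W} (f : X ⟶ Y) (g : Y ⟶ Z) (φ : Hmt Z W),
    rcomp (f ≫ g) φ = rcomp f (rcomp g φ)
  lcomp_rcomp : ∀ {X Y Z W} (f : X ⟶ Y) (φ : Hmt Y Z) (g : Z ⟶ W),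
    lcomp (rcomp f φ) g = rcomp f (lcomp φ g)
  d_lcomp : ∀ {X Y Z} (φ : Hmt X Y) (g : Y ⟶ Z), d (lcomp φ g) = d φ ≫ g
  d_rcomp : ∀ {X Y Z} (f : X ⟶ Y) (φ : Hmt Y Z), d (rcomp f φ) = f ≫ d φ

attribute [instance] HomotopyStructure.addCommGroup

/-- A pseudonatural transformation `ξ : F ⇒ G` between functors into a category equipped
with a homotopy layer `H`: cochain components `app U : F(U) ⟶ G(U)`, homotopy components
`hmt f` for each degree-0 morphism `f`, satisfying
`G(f)·ξ_U − ξ_{U'}·F(f) = ∂ξ_f`, `ξ_{1_U} = 0`, and `ξ_{f'∘f} = ξ_{f'}·F(f) + G(f')·ξ_f`. -/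
structure Pseudonat {C : Type*} [Category C] {D : Type*} [Category D] [Preadditive D]
    (H : HomotopyStructure D) (F G : C ⥤ D) where
  app : ∀ U : C, F.obj U ⟶ G.obj U
  hmt : ∀ {U U' : C}, (U ⟶ U') → H.Hmt (F.obj U) (G.obj U')
  d_hmt : ∀ {U U' : C} (f : U ⟶ U'),
    app U ≫ G.map f - F.map f ≫ app U' = H.d (hmt f)
  hmt_id : ∀ U : C, hmt (𝟙 U) = 0
  hmt_comp : ∀ {U U' U'' : C} (f : U ⟶ U') (f' : U' ⟶ U''),
    hmt (f ≫ f') = H.rcomp (F.map f) (hmt f') + H.lcomp (hmt f) (G.map f')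

/-! Unitality of `t` makes one factor of every summand vanish, and that zero is absorbed
because tensoring and composing with homotopies are additive in the relevant argument. -/

namespace HomotopyStructure

variable {D : Type*} [Category D] [Preadditive D] (H : HomotopyStructure D)

theorem zero_lcomp {X Y Z : D} (g : Y ⟶ Z) : H.lcomp (0 : H.Hmt X Y) g = 0 :=
  map_zero (AddMonoidHom.mk' (H.lcomp · g) fun φ ψ => H.lcomp_add φ ψ g)

theorem rcomp_zero {X Y Z : D} (f : X ⟶ Y) : H.rcomp f (0 : H.Hmt Y Z) = 0 :=
  map_zero (AddMonoidHom.mk' (H.rcomp f) (H.rcomp_add f))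

end HomotopyStructure

theorem triangle_axiom_order_h2_general
    {C : Type*} [Category C] [Preadditive C]
    (H : HomotopyStructure C)
    (tp : C → C → C) (I : C)
    (hassoc : ∀ U V W : C, tp (tp U V) W = tp U (tp V W))
    (th : ∀ {U U' V V' : C}, (U ⟶ U') → (V ⟶ V') → (tp U V ⟶ tp U' V'))
    (thH1 : ∀ {U U' V V' : C}, H.Hmt U U' → (V ⟶ V') → H.Hmt (tp U V) (tp U' V'))
    (thH2 : ∀ {U U' V V' : C}, (U ⟶ U') → H.Hmt V V' → H.Hmt (tp U V) (tp U' V'))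
    (th_add_left : ∀ {U U' V V' : C} (f f' : U ⟶ U') (g : V ⟶ V'),
      th (f + f') g = th f g + th f' g)
    (thH1_add_left : ∀ {U U' V V' : C} (φ ψ : H.Hmt U U') (g : V ⟶ V'),
      thH1 (φ + ψ) g = thH1 φ g + thH1 ψ g)
    (thH2_add_right : ∀ {U U' V V' : C} (f : U ⟶ U') (φ ψ : H.Hmt V V'),
      thH2 f (φ + ψ) = thH2 f φ + thH2 f ψ)
    (t : ∀ U V : C, tp U V ⟶ tp U V)
    (tH : ∀ {U U' V V' : C}, (U ⟶ U') → (V ⟶ V') → H.Hmt (tp U V) (tp U' V'))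
    -- unitality of the infinitesimal 2-braiding
    (hu1 : ∀ U : C, t U I = 0)
    (hu3 : ∀ {U U' : C} (f : U ⟶ U'), tH f (𝟙 I) = 0)
    (hu4 : ∀ {V V' : C} (g : V ⟶ V'), tH (𝟙 I) g = 0) :
    ∀ (U V U' V' : C) (f : U ⟶ U') (g : V ⟶ V'),
      -- cochain components: [t₁₂, t₂₃] at (U, I, V) vanishes, hence α_{UIV} = 1
      (th (t U I) (𝟙 V)
          ≫ (eqToHom (hassoc U I V) ≫ th (𝟙 U) (t I V) ≫ eqToHom (hassoc U I V).symm)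
        - (eqToHom (hassoc U I V) ≫ th (𝟙 U) (t I V) ≫ eqToHom (hassoc U I V).symm)
          ≫ th (t U I) (𝟙 V) = 0)
      ∧
      -- homotopy components: ([t₁₂,t₂₃])_{f ⊠ 1_I ⊠ g} vanishes, hence α_{f⊠1_I⊠g} = 0
      (H.rcomp
          (eqToHom (hassoc U I V) ≫ th (𝟙 U) (t I V) ≫ eqToHom (hassoc U I V).symm)
          (thH1 (tH f (𝟙 I)) g)
        + H.lcomp
            (H.rcomp (eqToHom (hassoc U I V))
              (H.lcomp (thH2 f (tH (𝟙 I) g)) (eqToHom (hassoc U' I V').symm)))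
            (th (t U' I) (𝟙 V'))
        - H.rcomp (th (t U I) (𝟙 V))
            (H.rcomp (eqToHom (hassoc U I V))
              (H.lcomp (thH2 f (tH (𝟙 I) g)) (eqToHom (hassoc U' I V').symm)))
        - H.lcomp (thH1 (tH f (𝟙 I)) g)
            (eqToHom (hassoc U' I V') ≫ th (𝟙 U') (t I V') ≫ eqToHom (hassoc U' I V').symm)
        = 0) := by
  intro U V U' V' f g
  have th_zero : ∀ {A A' B B' : C} (g : B ⟶ B'), th (0 : A ⟶ A') g = 0 := fun g =>
    map_zero (AddMonoidHom.mk' (th · g) fun f f' => th_add_left f f' g)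
  have thH1_zero : ∀ {A A' B B' : C} (g : B ⟶ B'), thH1 (0 : H.Hmt A A') g = 0 := fun g =>
    map_zero (AddMonoidHom.mk' (thH1 · g) fun φ ψ => thH1_add_left φ ψ g)
  have thH2_zero : ∀ {A A' B B' : C} (f : A ⟶ A'), thH2 f (0 : H.Hmt B B') = 0 := fun f =>
    map_zero (AddMonoidHom.mk' (thH2 f) (thH2_add_right f))
  refine ⟨?_, ?_⟩
  · rw [hu1, th_zero, Limits.zero_comp, Limits.comp_zero, sub_zero]
  · rw [hu1, hu3, hu4, th_zero, thH1_zero, thH2_zero]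
    simp only [H.zero_lcomp, H.rcomp_zero, add_zero, sub_zero]

/-- In a strictly-unital monoidal cochain 2-category (modelled by a
preadditive category with a homotopy layer `H`, a strictly associative and unital
monoidal product `tp` on objects with tensor `th` of degree-0 morphisms and tensors
`thH1, thH2` of a homotopy with a degree-0 morphism), let `t` be a *unital*
infinitesimal 2-braiding: cochain components `t U V` with `t U I = 0 = t I U`, and
homotopy components `tH f g` with `tH f 1_I = 0 = tH 1_I g`.  Then the order-h² triangle
axiom holds for the Drinfeld-associator ansatz `α = 1 + (h²/24)[t₁₂,t₂₃]`:

* the cochain commutator `[t₁₂,t₂₃]` at `(U, I, V)` vanishes, so `α_{UIV} = 1_{(UV)}`;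
* the homotopy component `([t₁₂,t₂₃])_{f ⊠ 1_I ⊠ g}` — which expands via the
  vertical-composition formula into four terms, each containing a factor
  `t_{UI}`, `t_{IV}`, `t_{f⊠1_I}` or `t_{1_I⊠g}` — vanishes, so `α_{f⊠1_I⊠g} = 0`. -/
theorem triangle_axiom_order_h2
    {C : Type*} [Category C] [Preadditive C]
    (H : HomotopyStructure C)
    (tp : C → C → C) (I : C)
    (hassoc : ∀ U V W : C, tp (tp U V) W = tp U (tp V W))
    (hunitR : ∀ U : C, tp U I = U) (hunitL : ∀ U : C, tp I U = U)
    (th : ∀ {U U' V V' : C}, (U ⟶ U') → (V ⟶ V') → (tp U V ⟶ tp U' V'))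
    (thH1 : ∀ {U U' V V' : C}, H.Hmt U U' → (V ⟶ V') → H.Hmt (tp U V) (tp U' V'))
    (thH2 : ∀ {U U' V V' : C}, (U ⟶ U') → H.Hmt V V' → H.Hmt (tp U V) (tp U' V'))
    (th_add_left : ∀ {U U' V V' : C} (f f' : U ⟶ U') (g : V ⟶ V'),
      th (f + f') g = th f g + th f' g)
    (thH1_add_left : ∀ {U U' V V' : C} (φ ψ : H.Hmt U U') (g : V ⟶ V'),
      thH1 (φ + ψ) g = thH1 φ g + thH1 ψ g)
    (thH2_add_right : ∀ {U U' V V' : C} (f : U ⟶ U') (φ ψ : H.Hmt V V'),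
      thH2 f (φ + ψ) = thH2 f φ + thH2 f ψ)
    (t : ∀ U V : C, tp U V ⟶ tp U V)
    (tH : ∀ {U U' V V' : C}, (U ⟶ U') → (V ⟶ V') → H.Hmt (tp U V) (tp U' V'))
    -- unitality of the infinitesimal 2-braiding
    (hu1 : ∀ U : C, t U I = 0)
    (hu2 : ∀ U : C, t I U = 0)
    (hu3 : ∀ {U U' : C} (f : U ⟶ U'), tH f (𝟙 I) = 0)
    (hu4 : ∀ {V V' : C} (g : V ⟶ V'), tH (𝟙 I) g = 0) :
    ∀ (U V U' V' : C) (f : U ⟶ U') (g : V ⟶ V'),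
      -- cochain components: [t₁₂, t₂₃] at (U, I, V) vanishes, hence α_{UIV} = 1
      (th (t U I) (𝟙 V)
          ≫ (eqToHom (hassoc U I V) ≫ th (𝟙 U) (t I V) ≫ eqToHom (hassoc U I V).symm)
        - (eqToHom (hassoc U I V) ≫ th (𝟙 U) (t I V) ≫ eqToHom (hassoc U I V).symm)
          ≫ th (t U I) (𝟙 V) = 0)
      ∧
      -- homotopy components: ([t₁₂,t₂₃])_{f ⊠ 1_I ⊠ g} vanishes, hence α_{f⊠1_I⊠g} = 0
      (H.rcomp
          (eqToHom (hassoc U I V) ≫ th (𝟙 U) (t I V) ≫ eqToHom (hassoc U I V).symm)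
          (thH1 (tH f (𝟙 I)) g)
        + H.lcomp
            (H.rcomp (eqToHom (hassoc U I V))
              (H.lcomp (thH2 f (tH (𝟙 I) g)) (eqToHom (hassoc U' I V').symm)))
            (th (t U' I) (𝟙 V'))
        - H.rcomp (th (t U I) (𝟙 V))
            (H.rcomp (eqToHom (hassoc U I V))
              (H.lcomp (thH2 f (tH (𝟙 I) g)) (eqToHom (hassoc U' I V').symm)))
        - H.lcomp (thH1 (tH f (𝟙 I)) g)
            (eqToHom (hassoc U' I V') ≫ th (𝟙 U') (t I V') ≫ eqToHom (hassoc U' I V').symm)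
        = 0) :=
  triangle_axiom_order_h2_general H tp I hassoc th thH1 thH2 th_add_left thH1_add_left
    thH2_add_right t tH hu1 hu3 hu4
end
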